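/- (Accumulation over time of distribution ratios.) Under the support assumption, for any n with 0 ≤ n < L, E_{τ∼p_{π_b}}[Σ_{t=n+1}^{L} γ^{t−1} (d_{t−n}^{π_e}(S_{t−n},A_{t−n})/d_{t−n}^{π_b}(S_{t−n},A_{t−n})) ρ_{t−n+1:t} R_t] = E_{τ∼p_{π_b}}[Σ_{t=n+1}^{L} γ^{t−1} (d_{1:L−n}^{π_e}(S_{t−n},A_{t−n})/d_{1:L−n}^{π_b}(S_{t−n},A_{t−n})) ρ_{t−n+1:t} R_t], with all ratios well defined p_{π_b}-almost surely. -/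

import Mathlib

open Finset

variable {S A : Type*} [Fintype S] [Fintype A] [DecidableEq S] [DecidableEq A]
  [Inhabited S] [Inhabited A]

/-- Weight contributed by the `t`-th step of trajectory `τ` under initial
distribution `d1`, transition kernel `T` and policy `π` (`π s a = π(a|s)`,
`T s a s' = T(s'|s,a)`). -/
noncomputable def stepW (d1 : S → ℝ) (T : S → A → S → ℝ) (π : S → A → ℝ)
    (τ : ℕ → S × A) : ℕ → ℝ
  | 0 => d1 (τ 0).1 * π (τ 0).1 (τ 0).2
  | t + 1 => T (τ t).1 (τ t).2 (τ (t + 1)).1 * π (τ (t + 1)).1 (τ (t + 1)).2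

/-- Probability under `p_π` of the first `n` steps (times `0, …, n-1`) of `τ`. -/
noncomputable def preP (d1 : S → ℝ) (T : S → A → S → ℝ) (π : S → A → ℝ)
    (n : ℕ) (τ : ℕ → S × A) : ℝ :=
  ∏ t ∈ range n, stepW d1 T π τ t

/-- Extension of a length-`n` prefix to an infinite trajectory. -/
def extTraj {n : ℕ} (σ : Fin n → S × A) : ℕ → S × A :=
  fun t => if h : t < n then σ ⟨t, h⟩ else default

/-- Expectation under `p_π` of a function depending only on the first `n` steps
of the trajectory. -/
noncomputable def expVal (d1 : S → ℝ) (T : S → A → S → ℝ) (π : S → A → ℝ)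
    (n : ℕ) (f : (ℕ → S × A) → ℝ) : ℝ :=
  ∑ σ : Fin n → S × A, preP d1 T π n (extTraj σ) * f (extTraj σ)

/-- `d_t^π(s,a)`, the time-`t` state-action distribution (time is 0-indexed,
so `t = 0` is the paper's time `1`). -/
noncomputable def dSA (d1 : S → ℝ) (T : S → A → S → ℝ) (π : S → A → ℝ)
    (t : ℕ) (s : S) (a : A) : ℝ :=
  expVal d1 T π (t + 1) (fun τ => if τ t = (s, a) then 1 else 0)

/-- Single-step likelihood ratio `ρ_t = π_e(A_t|S_t)/π_b(A_t|S_t)`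
(0-indexed time). -/
noncomputable def rho (πb πe : S → A → ℝ) (τ : ℕ → S × A) (t : ℕ) : ℝ :=
  πe (τ t).1 (τ t).2 / πb (τ t).1 (τ t).2

/-- Conditional expectation under `p_π` given `(S_t, A_t) = (s, a)`, for a
function of the first `n` steps. -/
noncomputable def condExpSA (d1 : S → ℝ) (T : S → A → S → ℝ) (π : S → A → ℝ)
    (n t : ℕ) (s : S) (a : A) (f : (ℕ → S × A) → ℝ) : ℝ :=
  expVal d1 T π n (fun τ => if τ t = (s, a) then f τ else 0) / dSA d1 T π t s a

/-- Averaged state-action distribution `d_{1:Th}^π` over the first `Th` steps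
with discount `γ`. -/
noncomputable def dAvg (d1 : S → ℝ) (T : S → A → S → ℝ) (π : S → A → ℝ)
    (γ : ℝ) (Th : ℕ) (s : S) (a : A) : ℝ :=
  (∑ t ∈ range Th, γ ^ t * dSA d1 T π t s a) / (∑ t ∈ range Th, γ ^ t)

/-- Discounted average state-action occupancy `d^π` (infinite horizon),
`d^π(s,a) = (1-γ) Σ_{t≥1} γ^{t-1} d_t^π(s,a)`. -/
noncomputable def dInf (d1 : S → ℝ) (T : S → A → S → ℝ) (π : S → A → ℝ)
    (γ : ℝ) (s : S) (a : A) : ℝ :=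
  (1 - γ) * ∑' t : ℕ, γ ^ t * dSA d1 T π t s a

/-- Infinite-horizon value `J(π) = E_{p_π}[Σ_{t≥1} γ^{t-1} R_t]`. -/
noncomputable def Jinf (d1 : S → ℝ) (T : S → A → S → ℝ) (π : S → A → ℝ)
    (r : S → A → ℝ) (γ : ℝ) : ℝ :=
  ∑' t : ℕ, γ ^ t * expVal d1 T π (t + 1) (fun τ => r (τ t).1 (τ t).2)

/-- Doubly-robust weight `w(m, n)` of the paper (`m` is the paper's 1-indexed
time, with `w(0, n) = 1`). -/
noncomputable def wDR (d1 : S → ℝ) (T : S → A → S → ℝ) (πb πe : S → A → ℝ)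
    (γ : ℝ) (n : ℕ) (τ : ℕ → S × A) (m : ℕ) : ℝ :=
  if m = 0 then 1
  else if m ≤ n then ∏ j ∈ range m, rho πb πe τ j
  else (dInf d1 T πe γ (τ (m - n - 1)).1 (τ (m - n - 1)).2 /
        dInf d1 T πb γ (τ (m - n - 1)).1 (τ (m - n - 1)).2) *
      ∏ j ∈ Icc (m - n) (m - 1), rho πb πe τ j


set_option linter.unusedSectionVars false


lemma stepW_congr (d1 : S → ℝ) (T : S → A → S → ℝ) (π : S → A → ℝ)
    {τ τ' : ℕ → S × A} (t : ℕ) (h : ∀ j, j ≤ t → τ j = τ' j) :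
    stepW d1 T π τ t = stepW d1 T π τ' t := by
  cases t with
  | zero => simp [stepW, h 0 le_rfl]
  | succ t => simp [stepW, h t (by omega), h (t + 1) le_rfl]

lemma preP_congr (d1 : S → ℝ) (T : S → A → S → ℝ) (π : S → A → ℝ)
    {τ τ' : ℕ → S × A} (n : ℕ) (h : ∀ j, j < n → τ j = τ' j) :
    preP d1 T π n τ = preP d1 T π n τ' := by
  unfold preP
  refine Finset.prod_congr rfl fun t ht => ?_
  exact stepW_congr d1 T π t fun j hj => h j (by simp at ht; omega)

lemma stepW_nonneg (d1 : S → ℝ) (T : S → A → S → ℝ) (π : S → A → ℝ)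
    (hd1 : ∀ s, 0 ≤ d1 s) (hT : ∀ s a s', 0 ≤ T s a s') (hπ : ∀ s a, 0 ≤ π s a)
    (τ : ℕ → S × A) (t : ℕ) : 0 ≤ stepW d1 T π τ t := by
  cases t with
  | zero => exact mul_nonneg (hd1 _) (hπ _ _)
  | succ t => exact mul_nonneg (hT _ _ _) (hπ _ _)

lemma preP_nonneg (d1 : S → ℝ) (T : S → A → S → ℝ) (π : S → A → ℝ)
    (hd1 : ∀ s, 0 ≤ d1 s) (hT : ∀ s a s', 0 ≤ T s a s') (hπ : ∀ s a, 0 ≤ π s a)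
    (n : ℕ) (τ : ℕ → S × A) : 0 ≤ preP d1 T π n τ :=
  Finset.prod_nonneg fun t _ => stepW_nonneg d1 T π hd1 hT hπ τ t

def joinFun {X : Type*} {a b : ℕ} (σ₁ : Fin a → X) (σ₂ : Fin b → X) :
    Fin (a + b) → X :=
  fun i => if h : (i : ℕ) < a then σ₁ ⟨i, h⟩
    else σ₂ ⟨(i : ℕ) - a, by have := i.isLt; omega⟩

lemma sum_join {X : Type*} [Fintype X] (a b : ℕ) (F : (Fin (a + b) → X) → ℝ) :
    ∑ σ : Fin (a + b) → X, F σ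
      = ∑ σ₁ : Fin a → X, ∑ σ₂ : Fin b → X, F (joinFun σ₁ σ₂) := by
  have := Fintype.sum_prod_type (f := fun q : (Fin a → X) × (Fin b → X) => F (joinFun q.1 q.2))
  rw [← this]
  refine (Fintype.sum_bijective
    (fun q : (Fin a → X) × (Fin b → X) => joinFun q.1 q.2) ?_ _ _ fun q => rfl).symm
  refine Function.bijective_iff_has_inverse.mpr
    ⟨fun τ => (fun i => τ ⟨i, by omega⟩, fun i => τ ⟨a + i, by omega⟩), ?_, ?_⟩
  · rintro ⟨σ₁, σ₂⟩
    refine Prod.ext ?_ ?_ <;> funext i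
    · simp [joinFun]
    · have h : ¬ ((a + (i : ℕ)) < a) := by omega
      simp only [joinFun, h, dif_neg, not_false_iff]
      congr 1
      exact Fin.ext (by simp)
  · intro τ
    funext i
    by_cases h : (i : ℕ) < a
    · simp only [joinFun, h, dif_pos]
    · simp only [joinFun, h, dif_neg, not_false_iff]
      congr 1
      exact Fin.ext (by simp; omega)

lemma extTraj_join_lt {a b : ℕ} (σ₁ : Fin a → S × A) (σ₂ : Fin b → S × A)
    {j : ℕ} (hj : j < a) :
    extTraj (joinFun σ₁ σ₂) j = extTraj σ₁ j := by
  have h1 : j < a + b := by omega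
  simp only [extTraj, joinFun, h1, dif_pos, hj]

lemma extTraj_join_ge {a b : ℕ} (σ₁ : Fin a → S × A) (σ₂ : Fin b → S × A)
    {j : ℕ} (h1 : a ≤ j) (h2 : j < a + b) :
    extTraj (joinFun σ₁ σ₂) j = extTraj σ₂ (j - a) := by
  have h3 : ¬ (j < a) := by omega
  have h4 : j - a < b := by omega
  simp only [extTraj, joinFun, h2, dif_pos, h3, dif_neg, not_false_iff, h4]

lemma expVal_congr {d1 : S → ℝ} {T : S → A → S → ℝ} {π : S → A → ℝ} {m : ℕ}
    {f g : (ℕ → S × A) → ℝ} (h : ∀ τ, f τ = g τ) :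
    expVal d1 T π m f = expVal d1 T π m g := by
  unfold expVal
  exact Finset.sum_congr rfl fun σ _ => by rw [h]

lemma expVal_succ (d1 : S → ℝ) (T : S → A → S → ℝ) (π : S → A → ℝ)
    (hd1sum : ∑ s, d1 s = 1) (hTsum : ∀ s a, ∑ s', T s a s' = 1)
    (hπsum : ∀ s, ∑ a, π s a = 1) (m : ℕ) (f : (ℕ → S × A) → ℝ)
    (hf : ∀ τ τ' : ℕ → S × A, (∀ j, j < m → τ j = τ' j) → f τ = f τ') :
    expVal d1 T π (m + 1) f = expVal d1 T π m f := by
  unfold expVal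
  rw [sum_join m 1]
  refine Finset.sum_congr rfl fun σ₁ _ => ?_
  have hpre : ∀ σ₂ : Fin 1 → S × A,
      preP d1 T π m (extTraj (joinFun σ₁ σ₂)) = preP d1 T π m (extTraj σ₁) :=
    fun σ₂ => preP_congr d1 T π m fun j hj => extTraj_join_lt σ₁ σ₂ hj
  have hff : ∀ σ₂ : Fin 1 → S × A,
      f (extTraj (joinFun σ₁ σ₂)) = f (extTraj σ₁) :=
    fun σ₂ => hf _ _ fun j hj => extTraj_join_lt σ₁ σ₂ hj
  have hstep : ∑ σ₂ : Fin 1 → S × A, stepW d1 T π (extTraj (joinFun σ₁ σ₂)) m = 1 := by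
    rw [← (Equiv.funUnique (Fin 1) (S × A)).symm.sum_comp
      (fun σ₂ => stepW d1 T π (extTraj (joinFun σ₁ σ₂)) m)]
    have hval : ∀ x : S × A,
        extTraj (joinFun σ₁ ((Equiv.funUnique (Fin 1) (S × A)).symm x)) m = x := by
      intro x
      rw [extTraj_join_ge σ₁ _ le_rfl (by omega)]
      simp [extTraj]
    cases m with
    | zero =>
      simp only [stepW]
      simp only [hval]
      rw [Fintype.sum_prod_type]
      simp_rw [← Finset.mul_sum]
      simp [hπsum, hd1sum]
    | succ m' =>
      simp only [stepW]
      have hprev : ∀ x : S × A,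
          extTraj (joinFun σ₁ ((Equiv.funUnique (Fin 1) (S × A)).symm x)) m' =
            extTraj σ₁ m' := fun x => extTraj_join_lt σ₁ _ (by omega)
      simp only [hval, hprev]
      rw [Fintype.sum_prod_type]
      simp_rw [← Finset.mul_sum]
      simp [hπsum, hTsum]
  calc ∑ σ₂ : Fin 1 → S × A,
        preP d1 T π (m + 1) (extTraj (joinFun σ₁ σ₂)) * f (extTraj (joinFun σ₁ σ₂))
      = ∑ σ₂ : Fin 1 → S × A,
          preP d1 T π m (extTraj σ₁) * f (extTraj σ₁)
            * stepW d1 T π (extTraj (joinFun σ₁ σ₂)) m := by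
        refine Finset.sum_congr rfl fun σ₂ _ => ?_
        have h1 : preP d1 T π (m + 1) (extTraj (joinFun σ₁ σ₂))
            = preP d1 T π m (extTraj (joinFun σ₁ σ₂))
              * stepW d1 T π (extTraj (joinFun σ₁ σ₂)) m := by
          unfold preP
          rw [Finset.prod_range_succ]
        rw [h1, hpre σ₂, hff σ₂]
        ring
    _ = preP d1 T π m (extTraj σ₁) * f (extTraj σ₁) := by
        rw [← Finset.mul_sum, hstep, mul_one]

lemma expVal_restrict (d1 : S → ℝ) (T : S → A → S → ℝ) (π : S → A → ℝ)
    (hd1sum : ∑ s, d1 s = 1) (hTsum : ∀ s a, ∑ s', T s a s' = 1)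
    (hπsum : ∀ s, ∑ a, π s a = 1) (m L : ℕ) (hm : m ≤ L) (f : (ℕ → S × A) → ℝ)
    (hf : ∀ τ τ' : ℕ → S × A, (∀ j, j < m → τ j = τ' j) → f τ = f τ') :
    expVal d1 T π L f = expVal d1 T π m f := by
  induction L with
  | zero => have : m = 0 := by omega
            subst this; rfl
  | succ L ih =>
    rcases Nat.lt_or_ge m (L + 1) with h | h
    · have hmL : m ≤ L := by omega
      rw [expVal_succ d1 T π hd1sum hTsum hπsum L f
        (fun τ τ' hj => hf τ τ' fun j hjm => hj j (by omega))]
      exact ih hmL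
    · have : m = L + 1 := by omega
      subst this; rfl

/-- Trajectory starting at `p` followed by the prefix `σ`. -/
def trajC (p : S × A) {n : ℕ} (σ : Fin n → S × A) : ℕ → S × A :=
  fun j => if j = 0 then p else extTraj σ (j - 1)

/-- Expected value of `g` over `n` further steps starting from `p`. -/
noncomputable def condE (T : S → A → S → ℝ) (π : S → A → ℝ) (p : S × A)
    (n : ℕ) (g : (ℕ → S × A) → ℝ) : ℝ :=
  ∑ σ : Fin n → S × A,
    (∏ j ∈ range n, T (trajC p σ j).1 (trajC p σ j).2 (trajC p σ (j + 1)).1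
      * π (trajC p σ (j + 1)).1 (trajC p σ (j + 1)).2) * g (trajC p σ)

lemma expVal_markov (d1 : S → ℝ) (T : S → A → S → ℝ) (π : S → A → ℝ)
    (hd1sum : ∑ s, d1 s = 1) (hTsum : ∀ s a, ∑ s', T s a s' = 1)
    (hπsum : ∀ s, ∑ a, π s a = 1) (k n L : ℕ) (hL : k + n + 1 ≤ L)
    (p : S × A) (g : (ℕ → S × A) → ℝ)
    (hg : ∀ τ τ' : ℕ → S × A, (∀ j, j ≤ n → τ j = τ' j) → g τ = g τ') :
    expVal d1 T π L (fun τ => (if τ k = p then (1 : ℝ) else 0) * g (fun j => τ (k + j)))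
      = dSA d1 T π k p.1 p.2 * condE T π p n g := by
  rw [expVal_restrict d1 T π hd1sum hTsum hπsum (k + n + 1) L hL _
    (by
      intro τ τ' hj
      rw [hj k (by omega)]
      by_cases h : τ' k = p
      · simp only [h, if_pos]
        rw [hg (fun j => τ (k + j)) (fun j => τ' (k + j))
          (fun j hjn => hj (k + j) (by omega))]
      · simp [h])]
  have hkn : k + n + 1 = (k + 1) + n := by omega
  rw [hkn]
  unfold expVal
  rw [sum_join (k + 1) n]
  have hdSA : dSA d1 T π k p.1 p.2
      = ∑ σ₁ : Fin (k + 1) → S × A, preP d1 T π (k + 1) (extTraj σ₁)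
          * (if extTraj σ₁ k = p then (1 : ℝ) else 0) := by
    unfold dSA expVal
    rfl
  rw [hdSA, condE, Finset.sum_mul_sum]
  refine Finset.sum_congr rfl fun σ₁ _ => Finset.sum_congr rfl fun σ₂ _ => ?_
  have hk1 : extTraj (joinFun σ₁ σ₂) k = extTraj σ₁ k := extTraj_join_lt σ₁ σ₂ (by omega)
  by_cases hp : extTraj σ₁ k = p
  · -- values of the joined trajectory at times k + j, j ≤ n
    have hval : ∀ j, j ≤ n → extTraj (joinFun σ₁ σ₂) (k + j) = trajC p σ₂ j := by
      intro j hj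
      cases j with
      | zero => simpa [trajC] using hk1.trans hp
      | succ j' =>
        rw [extTraj_join_ge σ₁ σ₂ (by omega) (by omega)]
        simp only [trajC, Nat.succ_ne_zero, if_neg, not_false_iff]
        congr 1
        omega
    have hpre2 : preP d1 T π ((k + 1) + n) (extTraj (joinFun σ₁ σ₂))
        = preP d1 T π (k + 1) (extTraj σ₁)
          * ∏ j ∈ range n, (T (trajC p σ₂ j).1 (trajC p σ₂ j).2 (trajC p σ₂ (j + 1)).1
            * π (trajC p σ₂ (j + 1)).1 (trajC p σ₂ (j + 1)).2) := by
      unfold preP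
      rw [Finset.prod_range_add]
      congr 1
      · exact Finset.prod_congr rfl fun t ht => stepW_congr d1 T π t
          (fun j hj => extTraj_join_lt σ₁ σ₂ (by simp at ht; omega))
      · refine Finset.prod_congr rfl fun j hj => ?_
        simp only [Finset.mem_range] at hj
        rw [show (k + 1) + j = (k + j) + 1 by omega]
        show T (extTraj (joinFun σ₁ σ₂) (k + j)).1 (extTraj (joinFun σ₁ σ₂) (k + j)).2
            (extTraj (joinFun σ₁ σ₂) (k + j + 1)).1
          * π (extTraj (joinFun σ₁ σ₂) (k + j + 1)).1
            (extTraj (joinFun σ₁ σ₂) (k + j + 1)).2 = _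
        rw [hval j (by omega), show k + j + 1 = k + (j + 1) by omega, hval (j + 1) (by omega)]
    have hgv : g (fun j => extTraj (joinFun σ₁ σ₂) (k + j)) = g (trajC p σ₂) :=
      hg _ _ fun j hj => hval j hj
    beta_reduce
    rw [hpre2, hk1, hp, if_pos rfl, hgv]
    ring
  · beta_reduce
    rw [hk1, if_neg hp]
    ring

lemma stepW_pos_of_pos (d1 : S → ℝ) (T : S → A → S → ℝ) (πb πe : S → A → ℝ)
    (hd1 : ∀ s, 0 ≤ d1 s) (hT : ∀ s a s', 0 ≤ T s a s')
    (hsupp : ∀ s a, 0 < πe s a → 0 < πb s a) (τ : ℕ → S × A) (t : ℕ)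
    (h : 0 < stepW d1 T πe τ t) : 0 < stepW d1 T πb τ t := by
  cases t with
  | zero =>
    simp only [stepW] at h ⊢
    rcases mul_pos_iff.mp h with ⟨h1, h2⟩ | ⟨h1, h2⟩
    · exact mul_pos h1 (hsupp _ _ h2)
    · exact absurd h1 (not_lt.mpr (hd1 _))
  | succ t =>
    simp only [stepW] at h ⊢
    rcases mul_pos_iff.mp h with ⟨h1, h2⟩ | ⟨h1, h2⟩
    · exact mul_pos h1 (hsupp _ _ h2)
    · exact absurd h1 (not_lt.mpr (hT _ _ _))

lemma dSA_nonneg (d1 : S → ℝ) (T : S → A → S → ℝ) (π : S → A → ℝ)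
    (hd1 : ∀ s, 0 ≤ d1 s) (hT : ∀ s a s', 0 ≤ T s a s') (hπ : ∀ s a, 0 ≤ π s a)
    (k : ℕ) (s : S) (a : A) : 0 ≤ dSA d1 T π k s a := by
  unfold dSA expVal
  refine Finset.sum_nonneg fun σ _ => mul_nonneg
    (preP_nonneg d1 T π hd1 hT hπ _ _) ?_
  beta_reduce
  split <;> norm_num

lemma dSA_zero (d1 : S → ℝ) (T : S → A → S → ℝ) (πb πe : S → A → ℝ)
    (hd1 : ∀ s, 0 ≤ d1 s) (hT : ∀ s a s', 0 ≤ T s a s')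
    (hπb : ∀ s a, 0 ≤ πb s a) (hπe : ∀ s a, 0 ≤ πe s a)
    (hsupp : ∀ s a, 0 < πe s a → 0 < πb s a) (k : ℕ) (s : S) (a : A)
    (h : dSA d1 T πb k s a = 0) : dSA d1 T πe k s a = 0 := by
  unfold dSA expVal at h ⊢
  have hterm := (Finset.sum_eq_zero_iff_of_nonneg (fun σ _ => mul_nonneg
    (preP_nonneg d1 T πb hd1 hT hπb _ _)
    (by split <;> norm_num : (0:ℝ) ≤ if extTraj σ k = (s, a) then 1 else 0))).mp h
  refine Finset.sum_eq_zero fun σ _ => ?_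
  beta_reduce
  by_cases hi : extTraj σ k = (s, a)
  · rw [if_pos hi, mul_one]
    by_contra hne
    have hpos : 0 < preP d1 T πe (k + 1) (extTraj σ) :=
      lt_of_le_of_ne (preP_nonneg d1 T πe hd1 hT hπe _ _) (Ne.symm hne)
    have hb : 0 < preP d1 T πb (k + 1) (extTraj σ) := by
      unfold preP at hpos ⊢
      refine Finset.prod_pos fun t ht => stepW_pos_of_pos d1 T πb πe hd1 hT hsupp _ t ?_
      have hne' := Finset.prod_ne_zero_iff.mp (ne_of_gt hpos) t ht
      exact lt_of_le_of_ne (stepW_nonneg d1 T πe hd1 hT hπe _ _) (Ne.symm hne')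
    have h0 := hterm σ (Finset.mem_univ σ)
    rw [if_pos hi, mul_one] at h0
    exact absurd h0 (ne_of_gt hb)
  · rw [if_neg hi, mul_zero]

lemma expVal_sum {d1 : S → ℝ} {T : S → A → S → ℝ} {π : S → A → ℝ} {m : ℕ}
    {ι : Type*} (s : Finset ι) (f : ι → (ℕ → S × A) → ℝ) :
    expVal d1 T π m (fun τ => ∑ i ∈ s, f i τ) = ∑ i ∈ s, expVal d1 T π m (f i) := by
  unfold expVal
  simp_rw [Finset.mul_sum]
  exact Finset.sum_comm

lemma expVal_const_mul {d1 : S → ℝ} {T : S → A → S → ℝ} {π : S → A → ℝ} {m : ℕ}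
    (c : ℝ) (f : (ℕ → S × A) → ℝ) :
    expVal d1 T π m (fun τ => c * f τ) = c * expVal d1 T π m f := by
  unfold expVal
  rw [Finset.mul_sum]
  exact Finset.sum_congr rfl fun σ _ => by ring

lemma prod_rho_shift (πb πe : S → A → ℝ) (τ : ℕ → S × A) (k n : ℕ) :
    ∏ j ∈ Icc 1 n, rho πb πe τ (k + j) = ∏ j ∈ Icc (k + 1) (k + n), rho πb πe τ j := by
  rw [← Finset.map_add_left_Icc, Finset.prod_map]
  rfl

lemma main_sum (d1 : S → ℝ) (T : S → A → S → ℝ) (πb πe : S → A → ℝ)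
    (r : S → A → ℝ) (γ : ℝ)
    (hd1sum : ∑ s, d1 s = 1) (hTsum : ∀ s a, ∑ s', T s a s' = 1)
    (hπbsum : ∀ s, ∑ a, πb s a = 1) (L n : ℕ) (hnL : n < L)
    (u : ℕ → S × A → ℝ) :
    expVal d1 T πb L (fun τ => ∑ t ∈ Ico n L, γ ^ t * u (t - n) (τ (t - n)) *
        (∏ j ∈ Icc (t - n + 1) t, rho πb πe τ j) * r (τ t).1 (τ t).2)
      = ∑ k ∈ range (L - n), ∑ p : S × A, γ ^ (n + k) * u k p *
          (dSA d1 T πb k p.1 p.2 *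
            condE T πb p n (fun τ => (∏ j ∈ Icc 1 n, rho πb πe τ j) * r (τ n).1 (τ n).2)) := by
  have h1 : ∀ τ : ℕ → S × A,
      (∑ t ∈ Ico n L, γ ^ t * u (t - n) (τ (t - n)) *
        (∏ j ∈ Icc (t - n + 1) t, rho πb πe τ j) * r (τ t).1 (τ t).2)
      = ∑ k ∈ range (L - n), γ ^ (n + k) * u k (τ k) *
          (∏ j ∈ Icc (k + 1) (n + k), rho πb πe τ j) * r (τ (n + k)).1 (τ (n + k)).2 := by
    intro τ
    rw [Finset.sum_Ico_eq_sum_range]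
    exact Finset.sum_congr rfl fun k _ => by simp only [Nat.add_sub_cancel_left]
  refine Eq.trans (expVal_congr h1) ?_
  refine Eq.trans (expVal_sum (range (L - n)) _) ?_
  refine Finset.sum_congr rfl fun k hk => ?_
  have hkL : k + n + 1 ≤ L := by
    simp only [Finset.mem_range] at hk; omega
  rw [Nat.add_comm n k]
  set gN : (ℕ → S × A) → ℝ :=
    fun τ => (∏ j ∈ Icc 1 n, rho πb πe τ j) * r (τ n).1 (τ n).2 with hgN
  have hgNc : ∀ τ τ' : ℕ → S × A, (∀ j, j ≤ n → τ j = τ' j) → gN τ = gN τ' := by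
    intro τ τ' hj
    rw [hgN]
    simp only
    rw [hj n le_rfl]
    congr 1
    refine Finset.prod_congr rfl fun j hjm => ?_
    unfold rho
    rw [hj j (Finset.mem_Icc.mp hjm).2]
  have hshift : ∀ τ : ℕ → S × A, gN (fun j => τ (k + j))
      = (∏ j ∈ Icc (k + 1) (k + n), rho πb πe τ j) * r (τ (k + n)).1 (τ (k + n)).2 := by
    intro τ
    rw [hgN]
    simp only
    rw [← prod_rho_shift]
    rfl
  have hsplit : ∀ τ : ℕ → S × A,
      γ ^ (k + n) * u k (τ k) * (∏ j ∈ Icc (k + 1) (k + n), rho πb πe τ j)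
        * r (τ (k + n)).1 (τ (k + n)).2
      = ∑ p : S × A, (γ ^ (k + n) * u k p) *
          ((if τ k = p then (1 : ℝ) else 0) * gN (fun j => τ (k + j))) := by
    intro τ
    have h2 : ∀ p : S × A, (γ ^ (k + n) * u k p) *
        ((if τ k = p then (1 : ℝ) else 0) * gN (fun j => τ (k + j)))
        = if τ k = p then (γ ^ (k + n) * u k p) * gN (fun j => τ (k + j)) else 0 := by
      intro p
      by_cases h : τ k = p <;> simp [h]
    rw [Finset.sum_congr rfl fun p _ => h2 p]
    rw [Fintype.sum_ite_eq (τ k) (fun p => (γ ^ (k + n) * u k p) * gN (fun j => τ (k + j)))]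
    rw [hshift τ]
    ring
  refine Eq.trans (expVal_congr hsplit) ?_
  refine Eq.trans (expVal_sum Finset.univ _) ?_
  refine Finset.sum_congr rfl fun p _ => ?_
  refine Eq.trans (expVal_const_mul (γ ^ (k + n) * u k p) _) ?_
  rw [expVal_markov d1 T πb hd1sum hTsum hπbsum k n L (by omega) p gN hgNc]

lemma key_alg (d1 : S → ℝ) (T : S → A → S → ℝ) (πb πe : S → A → ℝ) (γ : ℝ)
    (hd1 : ∀ s, 0 ≤ d1 s) (hT : ∀ s a s', 0 ≤ T s a s')
    (hπb : ∀ s a, 0 ≤ πb s a) (hπe : ∀ s a, 0 ≤ πe s a)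
    (hsupp : ∀ s a, 0 < πe s a → 0 < πb s a) (hγ0 : 0 ≤ γ)
    (L n : ℕ) (hnL : n < L) (C : S × A → ℝ) :
    (∑ k ∈ range (L - n), ∑ p : S × A, γ ^ (n + k) *
        (dSA d1 T πe k p.1 p.2 / dSA d1 T πb k p.1 p.2) * (dSA d1 T πb k p.1 p.2 * C p))
      = ∑ k ∈ range (L - n), ∑ p : S × A, γ ^ (n + k) *
          (dAvg d1 T πe γ (L - n) p.1 p.2 / dAvg d1 T πb γ (L - n) p.1 p.2) *
          (dSA d1 T πb k p.1 p.2 * C p) := by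
  rw [Finset.sum_comm, Finset.sum_comm (s := range (L - n))]
  refine Finset.sum_congr rfl fun p _ => ?_
  set E : ℝ := ∑ k ∈ range (L - n), γ ^ k * dSA d1 T πe k p.1 p.2 with hE
  set B : ℝ := ∑ k ∈ range (L - n), γ ^ k * dSA d1 T πb k p.1 p.2 with hB
  set c : ℝ := ∑ k ∈ range (L - n), γ ^ k with hc
  have hcpos : 0 < c := by
    rw [hc]
    refine lt_of_lt_of_le one_pos ?_
    calc (1:ℝ) = γ ^ 0 := by norm_num
      _ ≤ ∑ k ∈ range (L - n), γ ^ k :=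
        Finset.single_le_sum (f := fun k => γ ^ k)
          (fun i _ => pow_nonneg hγ0 i) (Finset.mem_range.mpr (by omega))
  have key : dAvg d1 T πe γ (L - n) p.1 p.2 / dAvg d1 T πb γ (L - n) p.1 p.2 * B = E := by
    have hAe : dAvg d1 T πe γ (L - n) p.1 p.2 = E / c := rfl
    have hAb : dAvg d1 T πb γ (L - n) p.1 p.2 = B / c := rfl
    by_cases hB0 : B = 0
    · have hterm : ∀ k ∈ range (L - n), γ ^ k * dSA d1 T πb k p.1 p.2 = 0 := by
        refine (Finset.sum_eq_zero_iff_of_nonneg fun k _ => mul_nonneg (pow_nonneg hγ0 k)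
          (dSA_nonneg d1 T πb hd1 hT hπb k p.1 p.2)).mp ?_
        rw [← hB, hB0]
      have hE0 : E = 0 := by
        rw [hE]
        refine Finset.sum_eq_zero fun k hk => ?_
        rcases mul_eq_zero.mp (hterm k hk) with hγk | hb
        · rw [hγk, zero_mul]
        · rw [dSA_zero d1 T πb πe hd1 hT hπb hπe hsupp k p.1 p.2 hb, mul_zero]
      rw [hB0, mul_zero, hE0]
    · have hcne : c ≠ 0 := ne_of_gt hcpos
      rw [hAe, hAb]
      field_simp
  calc (∑ k ∈ range (L - n), γ ^ (n + k) *
        (dSA d1 T πe k p.1 p.2 / dSA d1 T πb k p.1 p.2) * (dSA d1 T πb k p.1 p.2 * C p))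
      = ∑ k ∈ range (L - n), (γ ^ k * dSA d1 T πe k p.1 p.2) * (γ ^ n * C p) := by
        refine Finset.sum_congr rfl fun k _ => ?_
        rw [pow_add]
        by_cases h : dSA d1 T πb k p.1 p.2 = 0
        · rw [h, dSA_zero d1 T πb πe hd1 hT hπb hπe hsupp k p.1 p.2 h]
          ring
        · field_simp
    _ = E * (γ ^ n * C p) := by rw [hE, Finset.sum_mul]
    _ = (dAvg d1 T πe γ (L - n) p.1 p.2 / dAvg d1 T πb γ (L - n) p.1 p.2 * B)
          * (γ ^ n * C p) := by rw [key]
    _ = ∑ k ∈ range (L - n), γ ^ (n + k) *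
          (dAvg d1 T πe γ (L - n) p.1 p.2 / dAvg d1 T πb γ (L - n) p.1 p.2) *
          (dSA d1 T πb k p.1 p.2 * C p) := by
        rw [hB, Finset.mul_sum, Finset.sum_mul]
        refine Finset.sum_congr rfl fun k _ => ?_
        rw [pow_add]
        ring


/-- accumulation over time of distribution ratios: for
`0 ≤ n < L`, the time-dependent ratios `d_(t-n)^πe/d_(t-n)^πb` may be replaced
with the averaged ratios `d_(1:L-n)^πe/d_(1:L-n)^πb` in expectation
(0-indexed times: paper sum `t = n+1, …, L` is `t ∈ Ico n L`). -/
theorem accumulation_identity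
    (d1 : S → ℝ) (T : S → A → S → ℝ) (πb πe : S → A → ℝ) (r : S → A → ℝ)
    (γ : ℝ) (L n : ℕ) (hnL : n < L)
    (hd1 : ∀ s, 0 ≤ d1 s) (hd1sum : ∑ s, d1 s = 1)
    (hT : ∀ s a s', 0 ≤ T s a s') (hTsum : ∀ s a, ∑ s', T s a s' = 1)
    (hπb : ∀ s a, 0 ≤ πb s a) (hπbsum : ∀ s, ∑ a, πb s a = 1)
    (hπe : ∀ s a, 0 ≤ πe s a) (hπesum : ∀ s, ∑ a, πe s a = 1)
    (hγ0 : 0 ≤ γ) (hγ1 : γ < 1)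
    (hsupp : ∀ s a, 0 < πe s a → 0 < πb s a) :
    expVal d1 T πb L (fun τ => ∑ t ∈ Ico n L, γ ^ t *
        (dSA d1 T πe (t - n) (τ (t - n)).1 (τ (t - n)).2 /
          dSA d1 T πb (t - n) (τ (t - n)).1 (τ (t - n)).2) *
        (∏ j ∈ Icc (t - n + 1) t, rho πb πe τ j) * r (τ t).1 (τ t).2)
      = expVal d1 T πb L (fun τ => ∑ t ∈ Ico n L, γ ^ t *
          (dAvg d1 T πe γ (L - n) (τ (t - n)).1 (τ (t - n)).2 /
            dAvg d1 T πb γ (L - n) (τ (t - n)).1 (τ (t - n)).2) *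
          (∏ j ∈ Icc (t - n + 1) t, rho πb πe τ j) * r (τ t).1 (τ t).2) := by
  have h1 := main_sum d1 T πb πe r γ hd1sum hTsum hπbsum L n hnL
    (fun k p => dSA d1 T πe k p.1 p.2 / dSA d1 T πb k p.1 p.2)
  have h2 := main_sum d1 T πb πe r γ hd1sum hTsum hπbsum L n hnL
    (fun _ p => dAvg d1 T πe γ (L - n) p.1 p.2 / dAvg d1 T πb γ (L - n) p.1 p.2)
  refine (h1.trans ?_).trans h2.symm
  exact key_alg d1 T πb πe γ hd1 hT hπb hπe hsupp hγ0 L n hnL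
    (fun p => condE T πb p n (fun τ => (∏ j ∈ Icc 1 n, rho πb πe τ j) * r (τ n).1 (τ n).2))
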